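/- (Proposition 2, nonexpansivity.) Fix positive integers M, N, R, V ∈ ℝ^{M×N}, and H ∈ ℝ^{R×N}. Let λ ≥ 0 satisfy λ ≤ 2/‖HᵀH‖_F in case H ≠ O (and λ ≥ 0 arbitrary in case H = O). Define S_{H,λ}(W) := P₊[W − λ (WH − V)Hᵀ] for W ∈ ℝ^{M×R}. Then S_{H,λ} is nonexpansive: ‖S_{H,λ}(W₁) − S_{H,λ}(W₂)‖_F ≤ ‖W₁ − W₂‖_F for all W₁, W₂ ∈ ℝ^{M×R}. -/

import Mathlib

open Matrix

/-- Frobenius norm of a real matrix. -/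
noncomputable def frob {m n : Type*} [Fintype m] [Fintype n] (X : Matrix m n ℝ) : ℝ :=
  Real.sqrt (∑ i, ∑ j, (X i j) ^ 2)

/-- Entrywise projection onto the nonnegative orthant. -/
def pplus {m n : Type*} (X : Matrix m n ℝ) : Matrix m n ℝ :=
  Matrix.of fun i j => max (X i j) 0

/-!
`W ↦ W - λ (W H - V) Hᵀ` is a gradient step for `W ↦ ‖W H - V‖²/2`, so the difference of two
steps is `D - λ D H Hᵀ` with `D = W₁ - W₂`. Writing `G = D H` and `c = ‖Hᵀ H‖_F`, one has
`⟨D H Hᵀ, D⟩ = ‖G‖²` and `‖D H Hᵀ‖² = ⟨G, G Hᵀ H⟩ ≤ c ‖G‖²`, whence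
`‖D - λ D H Hᵀ‖² ≤ ‖D‖² - λ (2 - λ c) ‖G‖² ≤ ‖D‖²` as soon as `0 ≤ λ c ≤ 2`.
Finally `P₊` is nonexpansive because `x ↦ max x 0` is 1-Lipschitz in each entry.
-/

open RealInnerProductSpace

theorem norm_sub_smul_le_norm {E : Type*} [NormedAddCommGroup E] [InnerProductSpace ℝ E]
    {x y : E} {c t : ℝ} (hyx : 0 ≤ ⟪y, x⟫) (hy : ‖y‖ ^ 2 ≤ c * ⟪y, x⟫) (ht : 0 ≤ t)
    (htc : t * c ≤ 2) : ‖x - t • y‖ ≤ ‖x‖ := by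
  have hexpand : ‖x - t • y‖ ^ 2 = ‖x‖ ^ 2 - 2 * t * ⟪y, x⟫ + t ^ 2 * ‖y‖ ^ 2 := by
    rw [norm_sub_sq_real, inner_smul_right, norm_smul, mul_pow, Real.norm_eq_abs, sq_abs,
      real_inner_comm]
    ring
  have hquad : t ^ 2 * ‖y‖ ^ 2 ≤ 2 * t * ⟪y, x⟫ :=
    calc t ^ 2 * ‖y‖ ^ 2 ≤ t ^ 2 * (c * ⟪y, x⟫) := by gcongr
      _ = t * (t * c) * ⟪y, x⟫ := by ring
      _ ≤ t * 2 * ⟪y, x⟫ := by gcongr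
      _ = 2 * t * ⟪y, x⟫ := by ring
  refine (pow_le_pow_iff_left₀ (norm_nonneg _) (norm_nonneg _) two_ne_zero).mp ?_
  linarith

namespace Matrix

variable {l m n : Type*}

/-- A matrix as a vector of `EuclideanSpace`, whose inner product is the Frobenius one. -/
noncomputable def vecL2 (X : Matrix m n ℝ) : EuclideanSpace ℝ (n × m) := WithLp.toLp 2 X.vec

variable [Fintype l] [Fintype m] [Fintype n]

theorem inner_vecL2 (X Y : Matrix m n ℝ) : ⟪vecL2 X, vecL2 Y⟫ = (Xᵀ * Y).trace := by
  rw [vecL2, vecL2, EuclideanSpace.inner_toLp_toLp, star_trivial, dotProduct_comm,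
    vec_dotProduct_vec]

theorem inner_vecL2_mul_transpose (X : Matrix m l ℝ) (Y : Matrix m n ℝ) (Z : Matrix n l ℝ) :
    ⟪vecL2 (X * Zᵀ), vecL2 Y⟫ = ⟪vecL2 X, vecL2 (Y * Z)⟫ := by
  rw [inner_vecL2, inner_vecL2, transpose_mul, transpose_transpose, Matrix.mul_assoc,
    trace_mul_comm, Matrix.mul_assoc]

end Matrix

section Frobenius

variable {l m n : Type*} [Fintype l] [Fintype m] [Fintype n]

theorem frob_eq_norm_vecL2 (X : Matrix m n ℝ) : frob X = ‖X.vecL2‖ := by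
  rw [frob, EuclideanSpace.norm_eq, Fintype.sum_prod_type, Finset.sum_comm]
  simp [vecL2, Matrix.vec]

attribute [local instance] Matrix.frobeniusNormedAddCommGroup in
theorem frob_eq_frobenius_norm (X : Matrix m n ℝ) : frob X = ‖X‖ := by
  rw [frob, frobenius_norm_def, Real.sqrt_eq_rpow]
  simp [Real.norm_eq_abs, sq_abs]

attribute [local instance] Matrix.frobeniusNormedAddCommGroup in
theorem frob_mul_le (X : Matrix l m ℝ) (Y : Matrix m n ℝ) : frob (X * Y) ≤ frob X * frob Y := by
  simpa only [frob_eq_frobenius_norm] using frobenius_norm_mul X Y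

theorem frob_pplus_sub_pplus_le (X Y : Matrix m n ℝ) :
    frob (pplus X - pplus Y) ≤ frob (X - Y) := by
  refine Real.sqrt_le_sqrt <| Finset.sum_le_sum fun i _ => Finset.sum_le_sum fun j _ => ?_
  simpa [pplus, sq_abs] using
    pow_le_pow_left₀ (abs_nonneg _) (abs_max_sub_max_le_abs (X i j) (Y i j) 0) 2

theorem frob_sub_smul_mul_mul_transpose_le (D : Matrix m l ℝ) (H : Matrix l n ℝ) {t : ℝ}
    (ht : 0 ≤ t) (htc : t * frob (Hᵀ * H) ≤ 2) : frob (D - t • (D * H * Hᵀ)) ≤ frob D := by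
  set G := D * H
  have hinner : ⟪(G * Hᵀ).vecL2, D.vecL2⟫ = ‖G.vecL2‖ ^ 2 := by
    rw [inner_vecL2_mul_transpose, real_inner_self_eq_norm_sq]
  have hnorm : ‖(G * Hᵀ).vecL2‖ ^ 2 ≤ frob (Hᵀ * H) * ‖G.vecL2‖ ^ 2 :=
    calc ‖(G * Hᵀ).vecL2‖ ^ 2 = ⟪G.vecL2, (G * Hᵀ * H).vecL2⟫ := by
          rw [← inner_vecL2_mul_transpose, real_inner_self_eq_norm_sq]
      _ ≤ ‖G.vecL2‖ * ‖(G * Hᵀ * H).vecL2‖ := real_inner_le_norm _ _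
      _ ≤ ‖G.vecL2‖ * (‖G.vecL2‖ * frob (Hᵀ * H)) := by
          gcongr
          rw [← frob_eq_norm_vecL2, ← frob_eq_norm_vecL2, Matrix.mul_assoc]
          exact frob_mul_le _ _
      _ = frob (Hᵀ * H) * ‖G.vecL2‖ ^ 2 := by ring
  rw [frob_eq_norm_vecL2, frob_eq_norm_vecL2]
  exact norm_sub_smul_le_norm (hinner ▸ sq_nonneg _) (hinner ▸ hnorm) ht htc

end Frobenius

theorem gradient_step_sub_gradient_step {m n r : Type*} [Fintype n] [Fintype r]
    (V : Matrix m n ℝ) (H : Matrix r n ℝ) (t : ℝ) (W₁ W₂ : Matrix m r ℝ) :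
    (W₁ - t • ((W₁ * H - V) * Hᵀ)) - (W₂ - t • ((W₂ * H - V) * Hᵀ)) =
      (W₁ - W₂) - t • ((W₁ - W₂) * H * Hᵀ) := by
  simp only [Matrix.sub_mul, smul_sub]
  abel

theorem stmt_6_general (M N R : ℕ)
    (V : Matrix (Fin M) (Fin N) ℝ) (H : Matrix (Fin R) (Fin N) ℝ)
    (lam : ℝ) (hlam0 : 0 ≤ lam) (hlam : H ≠ 0 → lam ≤ 2 / frob (Hᵀ * H))
    (W₁ W₂ : Matrix (Fin M) (Fin R) ℝ) :
    frob (pplus (W₁ - lam • ((W₁ * H - V) * Hᵀ)) - pplus (W₂ - lam • ((W₂ * H - V) * Hᵀ))) ≤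
      frob (W₁ - W₂) := by
  have hstep : lam * frob (Hᵀ * H) ≤ 2 := by
    by_cases hc : frob (Hᵀ * H) = 0
    · simp [hc]
    have hH : H ≠ 0 := by
      rintro rfl
      simp [frob] at hc
    exact (le_div_iff₀ (lt_of_le_of_ne (Real.sqrt_nonneg _) (Ne.symm hc))).mp (hlam hH)
  calc _ ≤ frob ((W₁ - lam • ((W₁ * H - V) * Hᵀ)) - (W₂ - lam • ((W₂ * H - V) * Hᵀ))) :=
        frob_pplus_sub_pplus_le _ _
    _ = frob ((W₁ - W₂) - lam • ((W₁ - W₂) * H * Hᵀ)) := by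
        rw [gradient_step_sub_gradient_step]
    _ ≤ frob (W₁ - W₂) := frob_sub_smul_mul_mul_transpose_le _ _ hlam0 hstep

theorem stmt_6 (M N R : ℕ) (hM : 0 < M) (hN : 0 < N) (hR : 0 < R)
    (V : Matrix (Fin M) (Fin N) ℝ) (H : Matrix (Fin R) (Fin N) ℝ)
    (lam : ℝ) (hlam0 : 0 ≤ lam) (hlam : H ≠ 0 → lam ≤ 2 / frob (Hᵀ * H))
    (W₁ W₂ : Matrix (Fin M) (Fin R) ℝ) :
    frob (pplus (W₁ - lam • ((W₁ * H - V) * Hᵀ)) - pplus (W₂ - lam • ((W₂ * H - V) * Hᵀ))) ≤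
      frob (W₁ - W₂) :=
  stmt_6_general M N R V H lam hlam0 hlam W₁ W₂
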